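/- A generalized topological space (Y, γ) is sλ-regular if and only if for each point y ∈ Y and each sλ-open set G containing y there exists an sλ-open set E with y ∈ E ⊆ cl_sλ(E) ⊆ G. -/
import Mathlib


open Set

variable {Y : Type*}

/-- A generalized topology: contains ∅ and is closed under arbitrary unions. -/
def IsGT (γ : Set (Set Y)) : Prop := ∅ ∈ γ ∧ ∀ S ⊆ γ, ⋃₀ S ∈ γ

/-- γ-closure: intersection of all γ-closed supersets. -/
def gCl (γ : Set (Set Y)) (D : Set Y) : Set Y := ⋂₀ {C | Cᶜ ∈ γ ∧ D ⊆ C}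

/-- sγ-open set. -/
def SOpen (γ : Set (Set Y)) (D : Set Y) : Prop := ∃ V ∈ γ, V ⊆ D ∧ D ⊆ gCl γ V

/-- sγ-closed set. -/
def SClosed (γ : Set (Set Y)) (D : Set Y) : Prop := SOpen γ Dᶜ

/-- semi-kernel: intersection of all sγ-open supersets. -/
def sKer (γ : Set (Set Y)) (D : Set Y) : Set Y := ⋂₀ {G | SOpen γ G ∧ D ⊆ G}

/-- sγ-closure: intersection of all sγ-closed supersets. -/
def sCl (γ : Set (Set Y)) (D : Set Y) : Set Y := ⋂₀ {C | SClosed γ C ∧ D ⊆ C}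

/-- sλ-closed set. -/
def SLClosed (γ : Set (Set Y)) (D : Set Y) : Prop :=
  ∃ M N : Set Y, M = sKer γ M ∧ SClosed γ N ∧ D = M ∩ N

/-- sλ-open set. -/
def SLOpen (γ : Set (Set Y)) (D : Set Y) : Prop := SLClosed γ Dᶜ

/-- sλ-closure: intersection of all sλ-closed supersets. -/
def slCl (γ : Set (Set Y)) (D : Set Y) : Set Y := ⋂₀ {C | SLClosed γ C ∧ D ⊆ C}

/-- sλ-interior: union of all sλ-open subsets. -/
def slInt (γ : Set (Set Y)) (D : Set Y) : Set Y := ⋃₀ {U | SLOpen γ U ∧ U ⊆ D}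

/-- sg_λ-closed set. -/
def SgClosed (γ : Set (Set Y)) (D : Set Y) : Prop :=
  ∀ V : Set Y, SLOpen γ V → D ⊆ V → slCl γ D ⊆ V

/-- sg_λ-open set. -/
def SgOpen (γ : Set (Set Y)) (D : Set Y) : Prop := SgClosed γ Dᶜ

/-- sλR₀: every sλ-open set contains the sλ-closure of each of its singletons. -/
def SLR0 (γ : Set (Set Y)) : Prop :=
  ∀ G : Set Y, SLOpen γ G → ∀ y ∈ G, slCl γ {y} ⊆ G

/-- sλR₁. -/
def SLR1 (γ : Set (Set Y)) : Prop :=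
  ∀ p q : Y, p ∉ slCl γ {q} →
    ∃ E F : Set Y, SLOpen γ E ∧ SLOpen γ F ∧ p ∈ E ∧ q ∈ F ∧ E ∩ F = ∅

/-- sλT₁. -/
def SLT1 (γ : Set (Set Y)) : Prop :=
  ∀ p q : Y, p ≠ q →
    ∃ E F : Set Y, SLOpen γ E ∧ SLOpen γ F ∧ p ∈ E ∧ q ∉ E ∧ q ∈ F ∧ p ∉ F

/-- sλT₂ (sλ-Hausdorff). -/
def SLT2 (γ : Set (Set Y)) : Prop :=
  ∀ p q : Y, p ≠ q →
    ∃ E F : Set Y, SLOpen γ E ∧ SLOpen γ F ∧ p ∈ E ∧ q ∈ F ∧ E ∩ F = ∅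

/-- sλ-regular. -/
def SLRegular (γ : Set (Set Y)) : Prop :=
  ∀ A : Set Y, SLClosed γ A → ∀ p : Y, p ∉ A →
    ∃ E F : Set Y, SLOpen γ E ∧ SLOpen γ F ∧ A ⊆ E ∧ p ∈ F ∧
      slCl γ E ∩ slCl γ F = ∅

/-- sλ-normal. -/
def SLNormal (γ : Set (Set Y)) : Prop :=
  ∀ A B : Set Y, SLClosed γ A → SLClosed γ B → A ∩ B = ∅ →
    ∃ E F : Set Y, SLOpen γ E ∧ SLOpen γ F ∧ A ⊆ E ∧ B ⊆ F ∧
      slCl γ E ∩ slCl γ F = ∅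

/-- sλ-compact. -/
def SLCompact (γ : Set (Set Y)) : Prop :=
  ∀ 𝒞 : Set (Set Y), (∀ U ∈ 𝒞, SLOpen γ U) → ⋃₀ 𝒞 = univ →
    ∃ 𝒟 : Finset (Set Y), ↑𝒟 ⊆ 𝒞 ∧ ⋃₀ (𝒟 : Set (Set Y)) = univ

/-- sλ-weakly separated. -/
def SLWeaklySeparated (γ : Set (Set Y)) (G H : Set Y) : Prop :=
  (G ∩ slCl γ H) ∪ (H ∩ slCl γ G) = ∅

/-- sλ-completely normal. -/
def SLCompletelyNormal (γ : Set (Set Y)) : Prop :=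
  ∀ G H : Set Y, SLWeaklySeparated γ G H →
    ∃ U V : Set Y, SLOpen γ U ∧ SLOpen γ V ∧ G ⊆ U ∧ H ⊆ V ∧
      slCl γ U ∩ slCl γ V = ∅

/-- sλ-continuous real-valued function. -/
def SLContinuousReal (γ : Set (Set Y)) (f : Y → ℝ) : Prop :=
  ∀ s : Set ℝ, IsOpen s → SLOpen γ (f ⁻¹' s)


lemma subset_gCl' (γ : Set (Set Y)) (D : Set Y) : D ⊆ gCl γ D :=
  fun _ hx C hC => hC.2 hx

lemma gCl_mono' (γ : Set (Set Y)) {A B : Set Y} (h : A ⊆ B) : gCl γ A ⊆ gCl γ B :=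
  fun x hx C hC => hx C ⟨hC.1, h.trans hC.2⟩

lemma sOpen_sUnion' (γ : Set (Set Y)) (hγ : IsGT γ) (S : Set (Set Y))
    (h : ∀ U ∈ S, SOpen γ U) : SOpen γ (⋃₀ S) := by
  choose V hVγ hVsub hsubCl using h
  refine ⟨⋃₀ {W | ∃ U, ∃ hU : U ∈ S, W = V U hU}, ?_, ?_, ?_⟩
  · exact hγ.2 _ (by rintro W ⟨U, hU, rfl⟩; exact hVγ U hU)
  · rintro x ⟨W, ⟨U, hU, rfl⟩, hxW⟩
    exact ⟨U, hU, hVsub U hU hxW⟩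
  · rintro x ⟨U, hU, hxU⟩
    have hsub : V U hU ⊆ ⋃₀ {W | ∃ U, ∃ hU : U ∈ S, W = V U hU} :=
      fun z hz => ⟨V U hU, ⟨U, hU, rfl⟩, hz⟩
    exact gCl_mono' γ hsub (hsubCl U hU hxU)

lemma subset_sKer' (γ : Set (Set Y)) (D : Set Y) : D ⊆ sKer γ D :=
  fun _ hx G hG => hG.2 hx

lemma sKer_mono' (γ : Set (Set Y)) {A B : Set Y} (h : A ⊆ B) : sKer γ A ⊆ sKer γ B :=
  fun x hx G hG => hx G ⟨hG.1, h.trans hG.2⟩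

lemma slClosed_sInter' (γ : Set (Set Y)) (hγ : IsGT γ) (S : Set (Set Y))
    (h : ∀ C ∈ S, SLClosed γ C) : SLClosed γ (⋂₀ S) := by
  choose M N hM hN hMN using h
  refine ⟨⋂ C, ⋂ hC : C ∈ S, M C hC, ⋂ C, ⋂ hC : C ∈ S, N C hC, ?_, ?_, ?_⟩
  · refine Subset.antisymm (subset_sKer' γ _) ?_
    intro x hx
    refine mem_iInter.2 fun C => mem_iInter.2 fun hC => ?_
    have : sKer γ (⋂ C, ⋂ hC : C ∈ S, M C hC) ⊆ sKer γ (M C hC) :=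
      sKer_mono' γ (fun z hz => by exact mem_iInter.1 (mem_iInter.1 hz C) hC)
    have h2 := this hx
    rwa [← hM C hC] at h2
  · show SOpen γ _
    have : (⋂ C, ⋂ hC : C ∈ S, N C hC)ᶜ = ⋃₀ {W | ∃ C, ∃ hC : C ∈ S, W = (N C hC)ᶜ} := by
      ext x
      simp only [mem_compl_iff, mem_iInter, mem_sUnion, mem_setOf_eq, not_forall]
      constructor
      · rintro ⟨C, hC, hx⟩; exact ⟨(N C hC)ᶜ, ⟨C, hC, rfl⟩, hx⟩
      · rintro ⟨W, ⟨C, hC, rfl⟩, hx⟩; exact ⟨C, hC, hx⟩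
    rw [this]
    exact sOpen_sUnion' γ hγ _ (by rintro W ⟨C, hC, rfl⟩; exact hN C hC)
  · ext x
    simp only [mem_sInter, mem_inter_iff, mem_iInter]
    constructor
    · intro hx
      exact ⟨fun C hC => ((hMN C hC ▸ hx C hC : x ∈ M C hC ∩ N C hC)).1,
             fun C hC => ((hMN C hC ▸ hx C hC : x ∈ M C hC ∩ N C hC)).2⟩
    · rintro ⟨h1, h2⟩ C hC
      rw [hMN C hC]; exact ⟨h1 C hC, h2 C hC⟩

lemma slClosed_slCl' (γ : Set (Set Y)) (hγ : IsGT γ) (D : Set Y) : SLClosed γ (slCl γ D) :=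
  slClosed_sInter' γ hγ _ (fun _ hC => hC.1)

lemma subset_slCl' (γ : Set (Set Y)) (D : Set Y) : D ⊆ slCl γ D :=
  fun _ hx C hC => hC.2 hx

lemma slCl_min' {γ : Set (Set Y)} {C D : Set Y} (hC : SLClosed γ C) (h : D ⊆ C) :
    slCl γ D ⊆ C := fun x hx => hx C ⟨hC, h⟩

lemma slOpen_compl' {γ : Set (Set Y)} {D : Set Y} (h : SLClosed γ D) : SLOpen γ Dᶜ := by
  rw [SLOpen, compl_compl]; exact h


theorem stmt4 (γ : Set (Set Y)) (hγ : IsGT γ) :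
    SLRegular γ ↔
      ∀ (y : Y) (G : Set Y), SLOpen γ G → y ∈ G →
        ∃ E : Set Y, SLOpen γ E ∧ y ∈ E ∧ E ⊆ slCl γ E ∧ slCl γ E ⊆ G := by
  constructor
  · intro hreg y G hG hyG
    obtain ⟨E, F, hE, hF, hGE, hyF, hdisj⟩ := hreg Gᶜ hG y (by simpa using hyG)
    refine ⟨F, hF, hyF, subset_slCl' γ F, fun x hx => ?_⟩
    by_contra hxG
    have hxE : x ∈ slCl γ E := subset_slCl' γ E (hGE hxG)
    exact absurd (Set.ext_iff.1 hdisj x) (by simp [hxE, hx])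
  · intro h A hA p hp
    obtain ⟨E1, hE1, hpE1, _, hclE1⟩ := h p Aᶜ (slOpen_compl' hA) hp
    obtain ⟨E2, hE2, hpE2, _, hclE2⟩ := h p E1 hE1 hpE1
    refine ⟨(slCl γ E1)ᶜ, E2, slOpen_compl' (slClosed_slCl' γ hγ E1), hE2, ?_, hpE2, ?_⟩
    · intro x hx
      simp only [mem_compl_iff]
      intro hxcl
      exact (hclE1 hxcl) hx
    · have h1 : slCl γ ((slCl γ E1)ᶜ) ⊆ E1ᶜ :=
        slCl_min' hE1 (compl_subset_compl.2 (subset_slCl' γ E1))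
      ext x
      simp only [mem_inter_iff, mem_empty_iff_false, iff_false, not_and]
      intro hx1 hx2
      exact (h1 hx1) (hclE2 hx2)
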